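/- With α_j, c_j, s_n, b_j defined as follows — α_0=α_1=α_2=1, α_j=(e/j)^j for j≥3; (c_j) strictly positive decreasing with c_{j+1} ≤ α_j α_{2j²} c_j; s_n = n(n+1)/2; b_0=c_0, b_1=c_1, b_{s_n+k} = c_{n+1}/α_{n+1−k} for n ≥ 1, 1 ≤ k ≤ n+1 — one has b_{m+n} ≤ α_m·b_n for all m ≥ 0 and n ≥ 2. -/
import Mathlib


open Filter Topology

/-- `α_0 = α_1 = α_2 = 1` and `α_j = (e/j)^j` for `j ≥ 3`. -/
noncomputable def alphaSeq : ℕ → ℝ := fun j => if j ≤ 2 then 1 else (Real.exp 1 / j) ^ j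

/-- `s_n = 1 + 2 + ⋯ + n = n(n+1)/2`. -/
def sTri (n : ℕ) : ℕ := n * (n + 1) / 2

/-- The sequence `(b j)` of the counterexample: `b 0 = c 0`, `b 1 = c 1`, and
`b (s n + k) = c (n+1) / α (n+1-k)` for `n ≥ 1`, `1 ≤ k ≤ n+1` (this determines `b`,
since every integer `≥ 2` is uniquely of this form). -/
def CounterB (c b : ℕ → ℝ) : Prop :=
  b 0 = c 0 ∧ b 1 = c 1 ∧
    ∀ n k : ℕ, 1 ≤ n → 1 ≤ k → k ≤ n + 1 →
      b (sTri n + k) = c (n + 1) / alphaSeq (n + 1 - k)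

lemma exp_one_lt_three : Real.exp 1 < 3 := by
  have := Real.exp_one_lt_d9; linarith

lemma alpha_pos (j : ℕ) : 0 < alphaSeq j := by
  unfold alphaSeq
  split
  · norm_num
  · next h =>
    have hj : (0:ℝ) < j := by exact_mod_cast (by omega : 0 < j)
    positivity

lemma alpha_le_one (j : ℕ) : alphaSeq j ≤ 1 := by
  unfold alphaSeq
  split
  · exact le_refl _
  · next h =>
    have hj : (3:ℝ) ≤ j := by exact_mod_cast (by omega : 3 ≤ j)
    have h1 : Real.exp 1 / j ≤ 1 := by
      rw [div_le_one (by linarith)]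
      linarith [exp_one_lt_three]
    have h0 : 0 ≤ Real.exp 1 / j := by positivity
    exact pow_le_one₀ h0 h1

lemma alpha_anti : Antitone alphaSeq := by
  apply antitone_nat_of_succ_le
  intro j
  rcases le_or_gt (j + 1) 2 with h | h
  · unfold alphaSeq
    rw [if_pos h, if_pos (by omega : j ≤ 2)]
  · rcases le_or_gt j 2 with h2 | h2
    · -- j = 2, j+1 = 3
      calc alphaSeq (j+1) ≤ 1 := alpha_le_one _
        _ = alphaSeq j := by unfold alphaSeq; rw [if_pos h2]
    · -- j ≥ 3
      unfold alphaSeq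
      rw [if_neg (by omega), if_neg (by omega)]
      have hj : (3:ℝ) ≤ j := by exact_mod_cast (by omega : 3 ≤ j)
      have hj1 : (0:ℝ) < (j:ℝ) + 1 := by linarith
      have hb0 : (0:ℝ) ≤ Real.exp 1 / ((j:ℝ)+1) := by positivity
      have hb1 : Real.exp 1 / ((j:ℝ)+1) ≤ 1 := by
        rw [div_le_one hj1]; linarith [exp_one_lt_three]
      have hle : Real.exp 1 / ((j:ℝ)+1) ≤ Real.exp 1 / j := by
        apply div_le_div_of_nonneg_left (le_of_lt (Real.exp_pos 1)) (by linarith) (by linarith)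
      push_cast
      calc (Real.exp 1 / ((j:ℝ)+1)) ^ (j+1)
          ≤ (Real.exp 1 / ((j:ℝ)+1)) ^ j := pow_le_pow_of_le_one hb0 hb1 (by omega)
        _ ≤ (Real.exp 1 / (j:ℝ)) ^ j := pow_le_pow_left₀ hb0 hle j

lemma alpha_submul (p q : ℕ) : alphaSeq (p + q) ≤ alphaSeq p * alphaSeq q := by
  rcases le_or_gt p 2 with hp | hp
  · have : alphaSeq p = 1 := by unfold alphaSeq; rw [if_pos hp]
    rw [this, one_mul]
    exact alpha_anti (Nat.le_add_left q p)
  · rcases le_or_gt q 2 with hq | hq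
    · have : alphaSeq q = 1 := by unfold alphaSeq; rw [if_pos hq]
      rw [this, mul_one]
      exact alpha_anti (Nat.le_add_right p q)
    · unfold alphaSeq
      rw [if_neg (by omega), if_neg (by omega), if_neg (by omega)]
      have hpp : (3:ℝ) ≤ p := by exact_mod_cast (by omega : 3 ≤ p)
      have hqq : (3:ℝ) ≤ q := by exact_mod_cast (by omega : 3 ≤ q)
      have hpq : ((p:ℝ) + q) ≠ 0 := by positivity
      push_cast
      rw [pow_add]
      have h0 : (0:ℝ) ≤ Real.exp 1 / ((p:ℝ) + q) := by positivity
      have hle1 : Real.exp 1 / ((p:ℝ) + q) ≤ Real.exp 1 / p := by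
        apply div_le_div_of_nonneg_left (le_of_lt (Real.exp_pos 1)) (by linarith) (by linarith)
      have hle2 : Real.exp 1 / ((p:ℝ) + q) ≤ Real.exp 1 / q := by
        apply div_le_div_of_nonneg_left (le_of_lt (Real.exp_pos 1)) (by linarith) (by linarith)
      exact mul_le_mul (pow_le_pow_left₀ h0 hle1 p) (pow_le_pow_left₀ h0 hle2 q)
        (pow_nonneg h0 q) (pow_nonneg (by positivity) p)

lemma two_mul_sTri (n : ℕ) : 2 * sTri n = n * (n + 1) := by
  unfold sTri
  exact Nat.two_mul_div_two_of_even (Nat.even_mul_succ_self n) |>.symm ▸ rfl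

lemma sTri_succ (n : ℕ) : sTri (n + 1) = sTri n + (n + 1) := by
  have h1 := two_mul_sTri (n + 1)
  have h2 := two_mul_sTri n
  have h3 : (n + 1) * (n + 1 + 1) = n * (n + 1) + 2 * (n + 1) := by ring
  omega

lemma sTri_mono : Monotone sTri := by
  apply monotone_nat_of_le_succ
  intro n
  rw [sTri_succ]
  omega

lemma decomp (n : ℕ) (hn : 2 ≤ n) :
    ∃ i k : ℕ, 1 ≤ i ∧ 1 ≤ k ∧ k ≤ i + 1 ∧ n = sTri i + k := by
  induction n, hn using Nat.le_induction with
  | base =>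
    refine ⟨1, 1, le_refl _, le_refl _, by omega, ?_⟩
    simp [sTri]
  | succ n hn ih =>
    obtain ⟨i, k, hi, hk1, hk2, hn'⟩ := ih
    rcases lt_or_eq_of_le hk2 with h | h
    · exact ⟨i, k + 1, hi, by omega, by omega, by omega⟩
    · refine ⟨i + 1, 1, by omega, le_refl _, by omega, ?_⟩
      have := sTri_succ i
      omega

/-- For the sequence `(b j)` of the counterexample construction,
`b (m+n) ≤ α m · b n` for all `m ≥ 0` and `n ≥ 2`. -/
theorem counterB_shift_bound (c b : ℕ → ℝ) (hcpos : ∀ j, 0 < c j) (hcdec : Antitone c)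
    (hcrec : ∀ j : ℕ, c (j + 1) ≤ alphaSeq j * alphaSeq (2 * j ^ 2) * c j)
    (hb : CounterB c b) :
    ∀ m n : ℕ, 2 ≤ n → b (m + n) ≤ alphaSeq m * b n := by
  obtain ⟨hb0, hb1, hbrec⟩ := hb
  intro m n hn
  obtain ⟨i, k, hi, hk1, hk2, hnik⟩ := decomp n hn
  obtain ⟨j, l, hj, hl1, hl2, hmjl⟩ := decomp (m + n) (le_trans hn (Nat.le_add_left _ _))
  have hbn : b n = c (i + 1) / alphaSeq (i + 1 - k) := by
    rw [hnik]; exact hbrec i k hi hk1 hk2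
  have hbmn : b (m + n) = c (j + 1) / alphaSeq (j + 1 - l) := by
    rw [hmjl]; exact hbrec j l hj hl1 hl2
  have hji : i ≤ j := by
    by_contra h
    push_neg at h
    have h1 : sTri (j + 1) ≤ sTri i := sTri_mono (by omega)
    have h2 : sTri (j + 1) = sTri j + (j + 1) := sTri_succ j
    omega
  rw [hbmn, hbn, ← mul_div_assoc,
    div_le_div_iff₀ (alpha_pos (j + 1 - l)) (alpha_pos (i + 1 - k))]
  rcases eq_or_lt_of_le hji with heq | hlt
  · subst heq
    have hlk : l = m + k := by omega
    have hkey : alphaSeq (i + 1 - k) ≤ alphaSeq m * alphaSeq (i + 1 - l) := by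
      have hsplit : i + 1 - k = m + (i + 1 - l) := by omega
      rw [hsplit]
      exact alpha_submul m _
    calc c (i + 1) * alphaSeq (i + 1 - k)
        ≤ c (i + 1) * (alphaSeq m * alphaSeq (i + 1 - l)) :=
          mul_le_mul_of_nonneg_left hkey (hcpos _).le
      _ = alphaSeq m * c (i + 1) * alphaSeq (i + 1 - l) := by ring
  · -- j > i, so j ≥ 2
    have hm : m ≤ 2 * j ^ 2 := by
      have h1 : sTri j + (j + 1) ≤ 2 * j ^ 2 := by
        have h2 := two_mul_sTri j
        nlinarith [hlt, hi]
      calc m ≤ sTri j + (j + 1) := by omega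
        _ ≤ 2 * j ^ 2 := h1
    have hcc : c (j + 1) ≤ alphaSeq j * alphaSeq (2 * j ^ 2) * c (i + 1) :=
      le_trans (hcrec j) (mul_le_mul_of_nonneg_left (hcdec hlt)
        (mul_nonneg (alpha_pos j).le (alpha_pos _).le))
    have ham : alphaSeq (2 * j ^ 2) ≤ alphaSeq m := alpha_anti hm
    have haj : alphaSeq j ≤ alphaSeq (j + 1 - l) := by
      have hsplit : j = (j + 1 - l) + (l - 1) := by omega
      calc alphaSeq j = alphaSeq ((j + 1 - l) + (l - 1)) := by rw [← hsplit]
        _ ≤ alphaSeq (j + 1 - l) * alphaSeq (l - 1) := alpha_submul _ _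
        _ ≤ alphaSeq (j + 1 - l) * 1 :=
            mul_le_mul_of_nonneg_left (alpha_le_one _) (alpha_pos _).le
        _ = alphaSeq (j + 1 - l) := mul_one _
    calc c (j + 1) * alphaSeq (i + 1 - k)
        ≤ c (j + 1) * 1 := mul_le_mul_of_nonneg_left (alpha_le_one _) (hcpos _).le
      _ = c (j + 1) := mul_one _
      _ ≤ alphaSeq j * alphaSeq (2 * j ^ 2) * c (i + 1) := hcc
      _ ≤ alphaSeq (j + 1 - l) * alphaSeq m * c (i + 1) :=
          mul_le_mul_of_nonneg_right
            (mul_le_mul haj ham (alpha_pos _).le (alpha_pos _).le) (hcpos _).le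
      _ = alphaSeq m * c (i + 1) * alphaSeq (j + 1 - l) := by ring
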